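/- arXiv:math/0610149 — 2 statements merged into one kernel-verified Lean document; each statement's English description precedes it below -/
import Mathlib

section
/- Let α ∈ (0,1), let β be real with 0 < β < α, and let u ∈ (−2+2α, 2−2α). Suppose H ∈ ℝ is such that u·d(H) ∉ S̄_{α,β}. Then |Im(u·d(H))| > β, and moreover |Im(u·d(H'))| > β for every H' ∈ ℝ with |H'| ≥ |H|. -/
open Real

noncomputable section

/-- `d(H) = √(1+iH)`, the principal square root. -/
def dC (H : ℝ) : ℂ := (1 + H * Complex.I) ^ ((1:ℂ)/2)

/-- The closed strip `S̄_{α,β} = {z : |Re z| ≤ 2−α, |Im z| ≤ β}`. -/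
def Sbar (α β : ℝ) : Set ℂ := {z : ℂ | |z.re| ≤ 2 - α ∧ |z.im| ≤ β}

lemma dC_sq (H : ℝ) : (dC H) ^ 2 = 1 + H * Complex.I := by
  unfold dC
  rw [show ((1:ℂ)/2) = (2:ℂ)⁻¹ by norm_num]
  exact Complex.cpow_ofNat_inv_pow _ 2

lemma dC_re_im (H : ℝ) : (dC H).re ^ 2 - (dC H).im ^ 2 = 1 := by
  have := congrArg Complex.re (dC_sq H)
  simp [pow_two, Complex.mul_re] at this
  nlinarith [this]


lemma dC_im_sq (H : ℝ) : (dC H).im ^ 2 = (Real.sqrt (1 + H ^ 2) - 1) / 2 := by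
  have h1 : ‖dC H‖ ^ 2 = Real.sqrt (1 + H ^ 2) := by
    have : ‖dC H‖ ^ 2 = ‖(dC H) ^ 2‖ := (norm_pow _ _).symm
    rw [this, dC_sq, Complex.norm_def, Complex.normSq_apply]
    norm_num
    ring_nf
  have h2 : (dC H).re ^ 2 + (dC H).im ^ 2 = Real.sqrt (1 + H ^ 2) := by
    rw [← h1, Complex.sq_norm, Complex.normSq_apply]; ring
  have h3 := dC_re_im H
  linarith

lemma mul_dC_im (u H : ℝ) : (((u : ℂ)) * dC H).im = u * (dC H).im := by
  simp [Complex.mul_im]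

lemma mul_dC_re (u H : ℝ) : (((u : ℂ)) * dC H).re = u * (dC H).re := by
  simp [Complex.mul_re]

theorem outside_strip_im_large (α β u : ℝ) (hα : α ∈ Set.Ioo (0:ℝ) 1) (hβ0 : 0 < β)
    (hβα : β < α) (hu : u ∈ Set.Ioo (-2 + 2*α) (2 - 2*α))
    (H : ℝ) (hH : (u : ℂ) * dC H ∉ Sbar α β) :
    β < |((u : ℂ) * dC H).im| ∧
    ∀ H' : ℝ, |H| ≤ |H'| → β < |((u : ℂ) * dC H').im| := by
  obtain ⟨hα0, hα1⟩ := hα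
  obtain ⟨hu1, hu2⟩ := hu
  -- key square formula
  have key : ∀ H : ℝ, (((u : ℂ) * dC H).im) ^ 2 = u ^ 2 * ((Real.sqrt (1 + H ^ 2) - 1) / 2) := by
    intro H
    rw [mul_dC_im, mul_pow, dC_im_sq]
  -- first: β^2 < Im^2 at H
  have hsq : β ^ 2 < (((u : ℂ) * dC H).im) ^ 2 := by
    simp only [Sbar, Set.mem_setOf_eq, not_and_or, not_le] at hH
    rcases hH with hre | him
    · -- |Re| > 2 - α
      rw [mul_dC_re] at hre
      have h1 := dC_re_im H
      have h2 : (2 - α) ^ 2 < (u * (dC H).re) ^ 2 := by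
        nlinarith [abs_nonneg (u * (dC H).re), sq_abs (u * (dC H).re)]
      rw [mul_dC_im]
      nlinarith [sq_nonneg (u * (dC H).im), sq_nonneg u]
    · nlinarith [abs_nonneg (((u : ℂ) * dC H).im), sq_abs (((u : ℂ) * dC H).im)]
  refine ⟨?_, ?_⟩
  · nlinarith [abs_nonneg (((u : ℂ) * dC H).im), sq_abs (((u : ℂ) * dC H).im)]
  · intro H' hle
    have hmono : Real.sqrt (1 + H ^ 2) ≤ Real.sqrt (1 + H' ^ 2) := by
      apply Real.sqrt_le_sqrt
      have : H ^ 2 ≤ H' ^ 2 := by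
        rw [← sq_abs H, ← sq_abs H']
        exact pow_le_pow_left₀ (abs_nonneg H) hle 2
      linarith
    have hsq' : β ^ 2 < (((u : ℂ) * dC H').im) ^ 2 := by
      rw [key] at hsq ⊢
      nlinarith [sq_nonneg u]
    nlinarith [abs_nonneg (((u : ℂ) * dC H').im), sq_abs (((u : ℂ) * dC H').im)]

end
end

section
/- Let P ≥ 0 and N ≥ 1 be integers and let z ∈ ℂ satisfy Re z ≥ |Im z| > 0 and N·(Im z)² ≥ 1. Then ∫₀^∞ |z+θ|^{2P}·exp( −N·Re((z+θ)²)/2 ) dθ ≤ e·2^P·N^{−1}·P!·|Im z|^{2P−1}. -/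
open Real MeasureTheory Filter Finset

noncomputable def Rfun (P : ℕ) (s : ℝ) : ℝ :=
  ∑ k ∈ Finset.range (P+1), ((P.factorial : ℝ) / k.factorial) * (1+s)^k

noncomputable def wfun (c x y θ : ℝ) : ℝ := c * ((x+θ)^2 - y^2) / 2

lemma Rfun_deriv (P : ℕ) (s : ℝ) :
    HasDerivAt (Rfun P) (Rfun P s - (1+s)^P) s := by
  have h : ∀ k ∈ Finset.range (P+1), HasDerivAt
      (fun s : ℝ => ((P.factorial : ℝ) / k.factorial) * (1+s)^k)
      (((P.factorial : ℝ) / k.factorial) * (k * (1+s)^(k-1))) s := by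
    intro k _
    have h1 : HasDerivAt (fun s : ℝ => (1+s)) 1 s := by
      simpa using (hasDerivAt_id s).const_add 1
    exact ((h1.pow k).const_mul _).congr_deriv (by ring)
  have := HasDerivAt.fun_sum h
  refine this.congr_deriv (Eq.symm ?_)
  unfold Rfun
  rw [Finset.sum_range_succ' (fun k => ((P.factorial : ℝ) / k.factorial) * (k * (1+s)^(k-1)))]
  rw [Finset.sum_range_succ (fun k => ((P.factorial : ℝ) / k.factorial) * (1+s)^k)]
  simp only [Nat.cast_zero, zero_mul, mul_zero, add_zero, Nat.factorial_zero]
  rw [div_self (by positivity : (P.factorial : ℝ) ≠ 0)]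
  rw [one_mul, add_sub_cancel_right]
  apply Finset.sum_congr rfl
  intro j _
  have : ((j+1).factorial : ℝ) = (j+1) * j.factorial := by
    rw [Nat.factorial_succ]; push_cast; ring
  rw [this]
  have hj : ((j:ℝ)+1) ≠ 0 := by positivity
  have hjf : (j.factorial : ℝ) ≠ 0 := by positivity
  field_simp
  simp only [Nat.add_sub_cancel, Nat.add_sub_cancel_left]
  push_cast
  ring

lemma wfun_deriv (c x y θ : ℝ) : HasDerivAt (wfun c x y) (c * (x+θ)) θ := by
  have hsq : HasDerivAt (fun θ : ℝ => (x+θ)^2) (2*(x+θ)) θ := by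
    simpa using ((hasDerivAt_id θ).const_add x).fun_pow 2
  exact (((hsq.sub_const (y^2)).const_mul c).div_const 2).congr_deriv (by ring)

lemma key_bound (P : ℕ) (c x y : ℝ) (hy : 0 < y) (hxy : y ≤ x) (hc1 : 1 ≤ c)
    (hc : 1 ≤ c * y^2) :
    (∫ θ in Set.Ioi (0:ℝ), ((x+θ)^2 + y^2)^P * Real.exp (-(wfun c x y θ))) ≤
      Real.exp 1 * 2^P * c⁻¹ * (P.factorial : ℝ) * y^(2*P) / y := by
  have hc0 : (0:ℝ) < c := lt_of_lt_of_le one_pos hc1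
  set G : ℝ → ℝ := fun θ => -(Rfun P (wfun c x y θ) * Real.exp (-(wfun c x y θ))) with hGdef
  set g : ℝ → ℝ := fun θ =>
      (1 + wfun c x y θ)^P * Real.exp (-(wfun c x y θ)) * (c * (x+θ)) with hgdef
  -- derivative of G is g
  have hG : ∀ θ : ℝ, HasDerivAt G (g θ) θ := by
    intro θ
    have hw := wfun_deriv c x y θ
    have h1 : HasDerivAt (fun θ => Rfun P (wfun c x y θ))
        ((Rfun P (wfun c x y θ) - (1 + wfun c x y θ)^P) * (c * (x+θ))) θ :=
      (Rfun_deriv P (wfun c x y θ)).comp θ hw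
    have h2 : HasDerivAt (fun θ => Real.exp (-(wfun c x y θ)))
        (Real.exp (-(wfun c x y θ)) * (-(c * (x+θ)))) θ := hw.neg.exp
    exact ((h1.mul h2).neg).congr_deriv (by ring)
  -- nonnegativity of w for θ ≥ 0
  have hw0 : ∀ θ : ℝ, 0 ≤ θ → 0 ≤ wfun c x y θ := by
    intro θ hθ
    have hxt : y ≤ x + θ := by linarith
    have : y^2 ≤ (x+θ)^2 := pow_le_pow_left₀ hy.le hxt 2
    unfold wfun
    have : 0 ≤ (x+θ)^2 - y^2 := by linarith
    positivity
  -- nonnegativity of g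
  have hgpos : ∀ θ ∈ Set.Ioi (0:ℝ), 0 ≤ g θ := by
    intro θ hθ
    have hθ0 : (0:ℝ) ≤ θ := (Set.mem_Ioi.1 hθ).le
    have h1 : 0 ≤ 1 + wfun c x y θ := by linarith [hw0 θ hθ0]
    have h2 : 0 ≤ x + θ := by linarith
    have := Real.exp_pos (-(wfun c x y θ))
    simp only [hgdef]
    positivity
  -- w tends to atTop
  have hwat : Tendsto (wfun c x y) atTop atTop := by
    have h1 : Tendsto (fun θ : ℝ => x + θ) atTop atTop :=
      tendsto_atTop_add_const_left _ x tendsto_id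
    have h2 : Tendsto (fun θ : ℝ => (x+θ)^2) atTop atTop :=
      (tendsto_pow_atTop two_ne_zero).comp h1
    have h3 : Tendsto (fun θ : ℝ => (x+θ)^2 - y^2) atTop atTop :=
      tendsto_atTop_add_const_right _ (-(y^2)) h2 |>.congr (fun θ => by ring)
    have h4 := h3.atTop_mul_const (show (0:ℝ) < c/2 by positivity)
    exact h4.congr (fun θ => by unfold wfun; ring)
  -- R s * exp (-s) tends to 0
  have hRe : Tendsto (fun s : ℝ => Rfun P s * Real.exp (-s)) atTop (nhds 0) := by
    have : ∀ s : ℝ, Rfun P s * Real.exp (-s)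
        = ∑ k ∈ Finset.range (P+1),
            ((P.factorial : ℝ) / k.factorial) * ((1+s)^k * Real.exp (-s)) := by
      intro s; unfold Rfun; rw [Finset.sum_mul]; apply Finset.sum_congr rfl
      intro k _; ring
    rw [funext this]
    have h0 : ∀ k : ℕ, Tendsto (fun s : ℝ => (1+s)^k * Real.exp (-s)) atTop (nhds 0) := by
      intro k
      have h1 : Tendsto (fun s : ℝ => (1+s)) atTop atTop :=
        tendsto_atTop_add_const_left _ 1 tendsto_id
      have h2 := (tendsto_pow_mul_exp_neg_atTop_nhds_zero k).comp h1
      have h3 := h2.const_mul (Real.exp 1)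
      rw [mul_zero] at h3
      refine h3.congr (fun s => ?_)
      simp only [Function.comp]
      rw [show Real.exp (-s) = Real.exp 1 * Real.exp (-(1+s)) by
        rw [← Real.exp_add]; congr 1; ring]
      ring
    have := tendsto_finset_sum (Finset.range (P+1))
      (fun k _ => ((h0 k).const_mul ((P.factorial : ℝ) / k.factorial)))
    simpa using this
  have hGt : Tendsto G atTop (nhds 0) := by
    have := (hRe.comp hwat).neg
    rw [neg_zero] at this
    exact this.congr (fun θ => by simp [hGdef, Function.comp])
  -- the integral identity
  have hint : (∫ θ in Set.Ioi (0:ℝ), g θ) = 0 - G 0 :=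
    integral_Ioi_of_hasDerivAt_of_nonneg' (fun θ _ => hG θ) hgpos hGt
  have hInt : IntegrableOn g (Set.Ioi (0:ℝ)) :=
    integrableOn_Ioi_deriv_of_nonneg' (fun θ _ => hG θ) hgpos hGt
  set C : ℝ := 2^P * y^(2*P) / (c*y) with hCdef
  have hCpos : 0 ≤ C := by positivity
  -- pointwise bound
  have hle : ∀ θ ∈ Set.Ioi (0:ℝ),
      ((x+θ)^2 + y^2)^P * Real.exp (-(wfun c x y θ)) ≤ C * g θ := by
    intro θ hθ
    have hθ0 : (0:ℝ) ≤ θ := (Set.mem_Ioi.1 hθ).le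
    have hw0' := hw0 θ hθ0
    have h1 : (x+θ)^2 + y^2 ≤ 2*y^2*(1 + wfun c x y θ) := by
      have hxt : y ≤ x + θ := by linarith
      have hsq : y^2 ≤ (x+θ)^2 := pow_le_pow_left₀ hy.le hxt 2
      have hkey : 0 ≤ ((x+θ)^2 - y^2) * (c*y^2 - 1) :=
        mul_nonneg (by linarith) (by linarith)
      unfold wfun
      nlinarith [hkey]
    have h2 : ((x+θ)^2 + y^2)^P ≤ (2*y^2*(1 + wfun c x y θ))^P := by
      apply pow_le_pow_left₀ (by positivity) h1
    have h3 : (2*y^2*(1 + wfun c x y θ))^P = 2^P * y^(2*P) * (1 + wfun c x y θ)^P := by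
      rw [mul_pow, mul_pow, ← pow_mul]
    have hexp := (Real.exp_pos (-(wfun c x y θ))).le
    have h4 : ((x+θ)^2 + y^2)^P * Real.exp (-(wfun c x y θ))
        ≤ 2^P * y^(2*P) * ((1 + wfun c x y θ)^P * Real.exp (-(wfun c x y θ))) := by
      rw [← mul_assoc, ← h3]
      exact mul_le_mul_of_nonneg_right h2 hexp
    refine h4.trans ?_
    have hCg : C * g θ = 2^P * y^(2*P) * ((1 + wfun c x y θ)^P * Real.exp (-(wfun c x y θ)))
        * ((x+θ)/y) := by
      simp only [hCdef, hgdef]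
      field_simp
    rw [hCg]
    have hone : 1 ≤ (x+θ)/y := (one_le_div hy).2 (by linarith)
    have hB : 0 ≤ 2^P * y^(2*P) * ((1 + wfun c x y θ)^P * Real.exp (-(wfun c x y θ))) := by
      have : 0 ≤ 1 + wfun c x y θ := by linarith
      positivity
    exact le_mul_of_one_le_right hB hone
  -- put it together
  have hmono : (∫ θ in Set.Ioi (0:ℝ), ((x+θ)^2 + y^2)^P * Real.exp (-(wfun c x y θ)))
      ≤ ∫ θ in Set.Ioi (0:ℝ), C * g θ := by
    apply integral_mono_of_nonneg
    · exact Filter.Eventually.of_forall (fun θ => by positivity)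
    · exact hInt.const_mul C
    · exact (ae_restrict_iff' measurableSet_Ioi).2 (Filter.Eventually.of_forall hle)
  refine hmono.trans ?_
  rw [MeasureTheory.integral_const_mul, hint]
  have hG0 : 0 - G 0 = Rfun P (wfun c x y 0) * Real.exp (-(wfun c x y 0)) := by
    simp [hGdef]
  rw [hG0]
  -- final bound: R s * exp(-s) ≤ P! * exp 1 for s ≥ 0
  set s := wfun c x y 0 with hsdef
  have hs0 : 0 ≤ s := hw0 0 le_rfl
  have hRs : Rfun P s ≤ (P.factorial : ℝ) * Real.exp (1+s) := by
    have h1 : Rfun P s = (P.factorial : ℝ) * ∑ k ∈ Finset.range (P+1), (1+s)^k / k.factorial := by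
      unfold Rfun; rw [Finset.mul_sum]; apply Finset.sum_congr rfl; intro k _; ring
    rw [h1]
    have h2 : ∑ k ∈ Finset.range (P+1), (1+s)^k / k.factorial ≤ Real.exp (1+s) :=
      Real.sum_le_exp_of_nonneg (by linarith) (P+1)
    exact mul_le_mul_of_nonneg_left h2 (by positivity)
  have hfinal : Rfun P s * Real.exp (-s) ≤ (P.factorial : ℝ) * Real.exp 1 := by
    have := mul_le_mul_of_nonneg_right hRs (Real.exp_pos (-s)).le
    rw [mul_assoc, ← Real.exp_add] at this
    calc Rfun P s * Real.exp (-s) ≤ (P.factorial : ℝ) * Real.exp (1+s + -s) := this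
      _ = (P.factorial : ℝ) * Real.exp 1 := by ring_nf
  calc C * (Rfun P s * Real.exp (-s)) ≤ C * ((P.factorial : ℝ) * Real.exp 1) :=
        mul_le_mul_of_nonneg_left hfinal hCpos
    _ = Real.exp 1 * 2^P * c⁻¹ * (P.factorial : ℝ) * y^(2*P) / y := by
        simp only [hCdef]; field_simp

theorem gamma_tail_integral_bound
    (P N : ℕ) (hN : 1 ≤ N) (z : ℂ)
    (h1 : |z.im| ≤ z.re) (h2 : 0 < |z.im|) (h3 : 1 ≤ (N : ℝ) * z.im ^ 2) :
    (∫ θ in Set.Ioi (0:ℝ),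
        ‖z + (θ : ℂ)‖ ^ (2 * P) * Real.exp (-(N : ℝ) * ((z + (θ : ℂ)) ^ 2).re / 2)) ≤
      Real.exp 1 * 2 ^ P * (N : ℝ)⁻¹ * (Nat.factorial P) * |z.im| ^ (2 * (P : ℝ) - 1) := by
  have hc1 : (1:ℝ) ≤ (N:ℝ) := by exact_mod_cast hN
  have hc : 1 ≤ (N:ℝ) * |z.im|^2 := by rwa [sq_abs]
  have hkey := key_bound P (N:ℝ) z.re |z.im| h2 h1 hc1 hc
  have heq : ∀ θ : ℝ, ‖z + (θ:ℂ)‖ ^ (2*P) *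
        Real.exp (-(N:ℝ) * ((z + (θ:ℂ))^2).re / 2)
      = ((z.re+θ)^2 + |z.im|^2)^P * Real.exp (-(wfun (N:ℝ) z.re |z.im| θ)) := by
    intro θ
    have e1 : ‖z + (θ:ℂ)‖ ^ (2*P) = ((z.re+θ)^2 + |z.im|^2)^P := by
      rw [pow_mul, Complex.sq_norm, Complex.normSq_apply]
      congr 1
      rw [Complex.add_re, Complex.add_im, Complex.ofReal_re, Complex.ofReal_im, add_zero, sq_abs]
      ring
    have e2 : (-(N:ℝ) * ((z + (θ:ℂ))^2).re / 2) = -(wfun (N:ℝ) z.re |z.im| θ) := by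
      rw [sq, Complex.mul_re, Complex.add_re, Complex.add_im, Complex.ofReal_re,
        Complex.ofReal_im, add_zero]
      unfold wfun
      rw [sq_abs]
      ring
    rw [e1, e2]
  simp only [heq]
  refine hkey.trans (le_of_eq ?_)
  rw [show (2*(P:ℝ)-1) = ((2*P : ℕ):ℝ) - 1 by push_cast; ring,
    Real.rpow_sub h2, Real.rpow_natCast, Real.rpow_one]
  field_simp
end
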